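/- arXiv:2007.11401 — 2 statements merged into one kernel-verified Lean document; each statement's English description precedes it below -/
import Mathlib

section
/- Let $f$ be a probability density on $\mathbb{R}$ with distribution function $F$, finite second moment, and let $X, Y$ be independent random variables with density $f$. Then $\int_{-\infty}^{\infty}\int_{-\infty}^{\infty} (F(x) \wedge F(y) - F(x)F(y))\,dx\,dy = \frac{1}{2} E[(X-Y)^2]$, where $s \wedge t = \min(s,t)$. -/
open MeasureTheory Set ENNReal

/-- ∫∫ (F(x) ∧ F(y) - F(x)F(y)) dx dy = (1/2) E[(X-Y)²] for X, Y i.i.d. with density f. -/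
theorem covariance_double_integral (f F : ℝ → ℝ)
    (hf_nonneg : ∀ x, 0 ≤ f x) (hf_int : Integrable f)
    (hf_tot : ∫ x, f x = 1)
    (h2 : Integrable (fun x => x ^ 2 * f x))
    (hF : F = fun x => ∫ y in Iic x, f y)
    (habs : Integrable (fun q : ℝ × ℝ => min (F q.1) (F q.2) - F q.1 * F q.2)) :
    ∫ q : ℝ × ℝ, (min (F q.1) (F q.2) - F q.1 * F q.2)
      = (1 / 2) * ∫ q : ℝ × ℝ, (q.1 - q.2) ^ 2 * (f q.1 * f q.2) := by
  classical
  -- a measurable nonnegative representative `g` of `f`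
  set g : ℝ → ℝ := fun x => max (hf_int.1.mk f x) 0 with hg_def
  have hg_meas : Measurable g :=
    (hf_int.1.stronglyMeasurable_mk.measurable).max measurable_const
  have hg_nonneg : ∀ x, 0 ≤ g x := fun x => le_max_right _ _
  have hfg : f =ᵐ[volume] g := hf_int.1.ae_eq_mk.mono fun x hx => by
    simp only [hg_def, ← hx]; exact (max_eq_left (hf_nonneg x)).symm
  have hg_int : Integrable g := hf_int.congr hfg
  have hg_tot : ∫ x, g x = 1 := by rw [← integral_congr_ae hfg, hf_tot]
  set φ : ℝ → ℝ≥0∞ := fun x => ENNReal.ofReal (g x) with hφ_def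
  have hφ_meas : Measurable φ := hg_meas.ennreal_ofReal
  have hφ_tot : ∫⁻ x, φ x = 1 := by
    rw [hφ_def, ← ofReal_integral_eq_lintegral_ofReal hg_int
      (Filter.Eventually.of_forall hg_nonneg), hg_tot, ENNReal.ofReal_one]
  set A : ℝ → ℝ≥0∞ := fun x => ∫⁻ y in Iic x, φ y with hA_def
  set B : ℝ → ℝ≥0∞ := fun x => ∫⁻ y in Ioi x, φ y with hB_def
  have hAB : ∀ x, A x + B x = 1 := by
    intro x
    have h : (∫⁻ y in Iic x, φ y) + ∫⁻ y in (Iic x)ᶜ, φ y = ∫⁻ y, φ y :=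
      lintegral_add_compl φ measurableSet_Iic
    rw [compl_Iic, hφ_tot] at h
    exact h
  have hA_le : ∀ x, A x ≤ 1 := fun x => le_trans (le_add_right le_rfl) (hAB x).le
  have hB_le : ∀ x, B x ≤ 1 := fun x => le_trans (le_add_left le_rfl) (hAB x).le
  have hA_fin : ∀ x, A x ≠ ∞ := fun x => (lt_of_le_of_lt (hA_le x) ENNReal.one_lt_top).ne
  have hB_fin : ∀ x, B x ≠ ∞ := fun x => (lt_of_le_of_lt (hB_le x) ENNReal.one_lt_top).ne
  -- F in terms of A
  have hFA : ∀ x, F x = (A x).toReal := by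
    intro x
    have h1 : F x = ∫ y in Iic x, g y := by
      rw [hF]
      exact integral_congr_ae (ae_restrict_of_ae hfg)
    have hAx : A x = ENNReal.ofReal (∫ y in Iic x, g y) :=
      (ofReal_integral_eq_lintegral_ofReal (hg_int.restrict)
        (ae_restrict_of_ae (Filter.Eventually.of_forall hg_nonneg))).symm
    rw [h1, hAx, ENNReal.toReal_ofReal (integral_nonneg (fun y => hg_nonneg y))]
  have hF_one_sub : ∀ x, 1 - F x = (B x).toReal := by
    intro x
    have := hAB x
    have h1 : (A x).toReal + (B x).toReal = 1 := by
      rw [← ENNReal.toReal_add (hA_fin x) (hB_fin x), this, ENNReal.toReal_one]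
    rw [hFA x]; linarith
  have hA_mono : Monotone A := fun x y hxy =>
    lintegral_mono_set (Iic_subset_Iic.mpr hxy)
  have hF_mono : Monotone F := fun x y hxy => by
    rw [hFA x, hFA y]
    exact ENNReal.toReal_mono (hA_fin y) (hA_mono hxy)
  -- pointwise identity for the LHS integrand
  have hpoint : ∀ x y : ℝ, min (F x) (F y) - F x * F y
      = (A (min x y) * B (max x y)).toReal := by
    intro x y
    rcases le_total x y with h | h
    · rw [min_eq_left h, max_eq_right h, min_eq_left (hF_mono h),
        ENNReal.toReal_mul, ← hFA x, ← hF_one_sub y]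
      ring
    · rw [min_eq_right h, max_eq_left h, min_eq_right (hF_mono h),
        ENNReal.toReal_mul, ← hFA y, ← hF_one_sub x]
      ring
  -- main Tonelli computation
  have hTonelli : ∫⁻ q : ℝ × ℝ, A (min q.1 q.2) * B (max q.1 q.2)
      = ∫⁻ p : ℝ × ℝ, φ p.1 * φ p.2 * (ENNReal.ofReal (p.2 - p.1)) ^ 2 := by
    have hK_meas : Measurable (fun z : (ℝ × ℝ) × (ℝ × ℝ) =>
        (if z.2.1 ≤ min z.1.1 z.1.2 then φ z.2.1 else 0)
          * (if max z.1.1 z.1.2 < z.2.2 then φ z.2.2 else 0)) := by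
      apply Measurable.mul
      · exact Measurable.ite
          (measurableSet_le measurable_snd.fst (measurable_fst.fst.min measurable_fst.snd))
          (hφ_meas.comp measurable_snd.fst) measurable_const
      · exact Measurable.ite
          (measurableSet_lt (measurable_fst.fst.max measurable_fst.snd) measurable_snd.snd)
          (hφ_meas.comp measurable_snd.snd) measurable_const
    have step1 : ∀ q : ℝ × ℝ, A (min q.1 q.2) * B (max q.1 q.2)
        = ∫⁻ p : ℝ × ℝ, (if p.1 ≤ min q.1 q.2 then φ p.1 else 0)
            * (if max q.1 q.2 < p.2 then φ p.2 else 0) := by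
      intro q
      have hA' : A (min q.1 q.2) = ∫⁻ s, (if s ≤ min q.1 q.2 then φ s else 0) := by
        simp only [hA_def]
        rw [← lintegral_indicator measurableSet_Iic]
        exact lintegral_congr fun s => by simp [Set.indicator_apply, Set.mem_Iic]
      have hB' : B (max q.1 q.2) = ∫⁻ t, (if max q.1 q.2 < t then φ t else 0) := by
        simp only [hB_def]
        rw [← lintegral_indicator measurableSet_Ioi]
        exact lintegral_congr fun t => by simp [Set.indicator_apply, Set.mem_Ioi]
      have hm1 : Measurable (fun s : ℝ => if s ≤ min q.1 q.2 then φ s else 0) :=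
        Measurable.ite measurableSet_Iic hφ_meas measurable_const
      have hm2 : Measurable (fun t : ℝ => if max q.1 q.2 < t then φ t else 0) :=
        Measurable.ite measurableSet_Ioi hφ_meas measurable_const
      rw [hA', hB', Measure.volume_eq_prod,
        ← lintegral_prod_mul hm1.aemeasurable hm2.aemeasurable]
    have step2 : ∀ p : ℝ × ℝ,
        (∫⁻ q : ℝ × ℝ, (if p.1 ≤ min q.1 q.2 then φ p.1 else 0)
            * (if max q.1 q.2 < p.2 then φ p.2 else 0))
          = φ p.1 * φ p.2 * (ENNReal.ofReal (p.2 - p.1)) ^ 2 := by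
      intro p
      have hfun : (fun q : ℝ × ℝ => (if p.1 ≤ min q.1 q.2 then φ p.1 else 0)
            * (if max q.1 q.2 < p.2 then φ p.2 else 0))
          = (Ico p.1 p.2 ×ˢ Ico p.1 p.2).indicator (fun _ => φ p.1 * φ p.2) := by
        funext q
        rw [Set.indicator_apply]
        by_cases h1 : p.1 ≤ min q.1 q.2
        · by_cases h2 : max q.1 q.2 < p.2
          · have hq : q ∈ Ico p.1 p.2 ×ˢ Ico p.1 p.2 := by
              rw [le_min_iff] at h1; rw [max_lt_iff] at h2
              exact ⟨⟨h1.1, h2.1⟩, ⟨h1.2, h2.2⟩⟩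
            simp [h1, h2, hq]
          · have hq : q ∉ Ico p.1 p.2 ×ˢ Ico p.1 p.2 := fun hq =>
              h2 (max_lt_iff.mpr ⟨hq.1.2, hq.2.2⟩)
            simp [h2, hq]
        · have hq : q ∉ Ico p.1 p.2 ×ˢ Ico p.1 p.2 := fun hq =>
            h1 (le_min_iff.mpr ⟨hq.1.1, hq.2.1⟩)
          simp [h1, hq]
      rw [hfun, lintegral_indicator (measurableSet_Ico.prod measurableSet_Ico),
        setLIntegral_const, Measure.volume_eq_prod, Measure.prod_prod,
        Real.volume_Ico, sq]
    calc ∫⁻ q : ℝ × ℝ, A (min q.1 q.2) * B (max q.1 q.2)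
        = ∫⁻ q : ℝ × ℝ, ∫⁻ p : ℝ × ℝ, (if p.1 ≤ min q.1 q.2 then φ p.1 else 0)
            * (if max q.1 q.2 < p.2 then φ p.2 else 0) := lintegral_congr step1
      _ = ∫⁻ p : ℝ × ℝ, ∫⁻ q : ℝ × ℝ, (if p.1 ≤ min q.1 q.2 then φ p.1 else 0)
            * (if max q.1 q.2 < p.2 then φ p.2 else 0) :=
          lintegral_lintegral_swap hK_meas.aemeasurable
      _ = ∫⁻ p : ℝ × ℝ, φ p.1 * φ p.2 * (ENNReal.ofReal (p.2 - p.1)) ^ 2 :=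
          lintegral_congr step2
  have hH_meas : Measurable (fun p : ℝ × ℝ =>
      φ p.1 * φ p.2 * (ENNReal.ofReal (p.2 - p.1)) ^ 2) :=
    ((hφ_meas.comp measurable_fst).mul (hφ_meas.comp measurable_snd)).mul
      (((measurable_snd.sub measurable_fst).ennreal_ofReal).pow_const 2)
  have hH_meas' : Measurable (fun p : ℝ × ℝ =>
      φ p.1 * φ p.2 * (ENNReal.ofReal (p.1 - p.2)) ^ 2) :=
    ((hφ_meas.comp measurable_fst).mul (hφ_meas.comp measurable_snd)).mul
      (((measurable_fst.sub measurable_snd).ennreal_ofReal).pow_const 2)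
  have hswap : ∫⁻ p : ℝ × ℝ, φ p.1 * φ p.2 * (ENNReal.ofReal (p.1 - p.2)) ^ 2
      = ∫⁻ p : ℝ × ℝ, φ p.1 * φ p.2 * (ENNReal.ofReal (p.2 - p.1)) ^ 2 := by
    have h1 : ∀ p : ℝ × ℝ, φ p.1 * φ p.2 * (ENNReal.ofReal (p.1 - p.2)) ^ 2
        = (fun p : ℝ × ℝ => φ p.1 * φ p.2 * (ENNReal.ofReal (p.2 - p.1)) ^ 2)
            (Prod.swap p) := by
      intro p; simp only [Prod.fst_swap, Prod.snd_swap]; ring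
    rw [lintegral_congr h1, Measure.volume_eq_prod]
    exact Measure.measurePreserving_swap.lintegral_comp hH_meas
  -- pointwise ofReal identity for the RHS integrand
  have hpt : ∀ q : ℝ × ℝ, ENNReal.ofReal ((q.1 - q.2) ^ 2 * (g q.1 * g q.2))
      = φ q.1 * φ q.2 * ENNReal.ofReal ((q.1 - q.2) ^ 2) := by
    intro q
    rw [ENNReal.ofReal_mul (sq_nonneg _), ENNReal.ofReal_mul (hg_nonneg _)]
    ring
  -- sum identity
  have hsum : (∫⁻ p : ℝ × ℝ, φ p.1 * φ p.2 * (ENNReal.ofReal (p.2 - p.1)) ^ 2)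
      + ∫⁻ p : ℝ × ℝ, φ p.1 * φ p.2 * (ENNReal.ofReal (p.2 - p.1)) ^ 2
      = ∫⁻ p : ℝ × ℝ, φ p.1 * φ p.2 * ENNReal.ofReal ((p.1 - p.2) ^ 2) := by
    have key : ∀ a : ℝ, (ENNReal.ofReal a) ^ 2 + (ENNReal.ofReal (-a)) ^ 2
        = ENNReal.ofReal (a ^ 2) := by
      intro a
      rcases le_total 0 a with h | h
      · rw [show ENNReal.ofReal (-a) = 0 from ENNReal.ofReal_of_nonpos (by linarith),
          ← ENNReal.ofReal_pow h]
        simp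
      · rw [ENNReal.ofReal_of_nonpos h, ← ENNReal.ofReal_pow (by linarith : (0:ℝ) ≤ -a)]
        simp [neg_sq]
    nth_rewrite 1 [← hswap]
    rw [← lintegral_add_left hH_meas']
    refine lintegral_congr fun p => ?_
    have hk := key (p.1 - p.2)
    rw [neg_sub] at hk
    rw [← mul_add, hk]
  -- LHS as toReal of lintegral
  have hLHS : ∫ q : ℝ × ℝ, (min (F q.1) (F q.2) - F q.1 * F q.2)
      = (∫⁻ q : ℝ × ℝ, A (min q.1 q.2) * B (max q.1 q.2)).toReal := by
    rw [integral_eq_lintegral_of_nonneg_ae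
      (Filter.Eventually.of_forall fun q => by rw [hpoint q.1 q.2]; exact ENNReal.toReal_nonneg)
      habs.1]
    congr 1
    refine lintegral_congr fun q => ?_
    rw [hpoint q.1 q.2]
    exact ENNReal.ofReal_toReal (ENNReal.mul_ne_top (hA_fin _) (hB_fin _))
  -- integrability of the RHS integrand (in terms of g)
  have hg2 : Integrable (fun x => x ^ 2 * g x) :=
    h2.congr (hfg.mono fun x hx => by simp only [hx])
  have hRmeas : Measurable (fun q : ℝ × ℝ => (q.1 - q.2) ^ 2 * (g q.1 * g q.2)) :=
    ((measurable_fst.sub measurable_snd).pow_const 2).mul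
      ((hg_meas.comp measurable_fst).mul (hg_meas.comp measurable_snd))
  have hR : Integrable (fun q : ℝ × ℝ => (q.1 - q.2) ^ 2 * (g q.1 * g q.2)) := by
    have hb : Integrable (fun q : ℝ × ℝ =>
        2 * ((q.1 ^ 2 * g q.1) * g q.2 + g q.1 * (q.2 ^ 2 * g q.2))) := by
      have h1 : Integrable (fun q : ℝ × ℝ => (q.1 ^ 2 * g q.1) * g q.2) := by
        rw [Measure.volume_eq_prod]; exact hg2.mul_prod hg_int
      have h2' : Integrable (fun q : ℝ × ℝ => g q.1 * (q.2 ^ 2 * g q.2)) := by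
        rw [Measure.volume_eq_prod]; exact hg_int.mul_prod hg2
      exact (h1.add h2').const_mul 2
    refine hb.mono hRmeas.aestronglyMeasurable (Filter.Eventually.of_forall fun q => ?_)
    have hgg : 0 ≤ g q.1 * g q.2 := mul_nonneg (hg_nonneg _) (hg_nonneg _)
    have hb0 : (0:ℝ) ≤ 2 * ((q.1 ^ 2 * g q.1) * g q.2 + g q.1 * (q.2 ^ 2 * g q.2)) := by
      have := hg_nonneg q.1; have := hg_nonneg q.2
      positivity
    rw [Real.norm_eq_abs, Real.norm_eq_abs,
      abs_of_nonneg (mul_nonneg (sq_nonneg _) hgg), abs_of_nonneg hb0]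
    nlinarith [mul_nonneg (sq_nonneg (q.1 + q.2)) hgg]
  -- RHS as toReal of lintegral
  have hRHS : ∫ q : ℝ × ℝ, (q.1 - q.2) ^ 2 * (f q.1 * f q.2)
      = (∫⁻ p : ℝ × ℝ, φ p.1 * φ p.2 * ENNReal.ofReal ((p.1 - p.2) ^ 2)).toReal := by
    have h1 : (fun q : ℝ × ℝ => f q.1) =ᵐ[volume] (fun q : ℝ × ℝ => g q.1) := by
      rw [Measure.volume_eq_prod]
      exact Measure.quasiMeasurePreserving_fst.ae_eq_comp hfg
    have h2' : (fun q : ℝ × ℝ => f q.2) =ᵐ[volume] (fun q : ℝ × ℝ => g q.2) := by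
      rw [Measure.volume_eq_prod]
      exact Measure.quasiMeasurePreserving_snd.ae_eq_comp hfg
    have hprod_ae : (fun q : ℝ × ℝ => (q.1 - q.2) ^ 2 * (f q.1 * f q.2))
        =ᵐ[volume] (fun q : ℝ × ℝ => (q.1 - q.2) ^ 2 * (g q.1 * g q.2)) := by
      filter_upwards [h1, h2'] with q e1 e2
      rw [e1, e2]
    rw [integral_congr_ae hprod_ae,
      integral_eq_lintegral_of_nonneg_ae (Filter.Eventually.of_forall fun q =>
        mul_nonneg (sq_nonneg _) (mul_nonneg (hg_nonneg _) (hg_nonneg _)))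
        hRmeas.aestronglyMeasurable]
    congr 1
    exact lintegral_congr hpt
  -- finiteness
  have hfinJ : (∫⁻ p : ℝ × ℝ, φ p.1 * φ p.2 * ENNReal.ofReal ((p.1 - p.2) ^ 2)) ≠ ∞ := by
    have := hR.lintegral_lt_top
    rw [lintegral_congr hpt] at this
    exact this.ne
  -- assemble
  set I : ℝ≥0∞ := ∫⁻ p : ℝ × ℝ, φ p.1 * φ p.2 * (ENNReal.ofReal (p.2 - p.1)) ^ 2 with hI_def
  have hIfin : I ≠ ∞ := by
    intro h
    rw [← hsum] at hfinJ
    exact hfinJ (by simp [h])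
  rw [hLHS, hTonelli, hRHS, ← hsum, ENNReal.toReal_add hIfin hIfin]
  ring
end

section
/- Let $f$ be a standard probability density on $\mathbb{R}$ (mean 0, variance 1, everywhere positive, differentiable) and let $p(x; \mu, \sigma) = \frac{1}{\sigma} f\left(\frac{x-\mu}{\sigma}\right)$. Then the Wasserstein Riemannian metric $g^W_{ij}(\theta)$, defined by $C(p_\theta, p_{\theta + d\theta}) = \int_{-\infty}^{\infty} \frac{1}{p(x;\theta)} \left(\int_{-\infty}^x \delta p(y)\,dy\right)^2 dx$ with $\delta p = \partial_\mu p\, d\mu + \partial_\sigma p\, d\sigma$, is the identity matrix: $C(p_\theta, p_{\theta+d\theta}) = d\mu^2 + d\sigma^2$ for all $\theta = (\mu, \sigma)$ with $\sigma > 0$, regardless of $f$. -/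
/-!
The primitive of `δp = ∂_μ p dμ + ∂_σ p dσ` is `-p(x) (dμ + z dσ)` with
`z = (x - μ)/σ`: after the substitution `z = (y - μ)/σ` the integrand is `-σ⁻²` times
the derivative of `f(z) (dμ + z dσ)`, which vanishes at `-∞`. The cost is therefore
`∫ p(x) (dμ + z dσ)² dx = ∫ f(z) (dμ + z dσ)² dz`, which the normalization of the first
two moments of `f` turns into `dμ² + dσ²`.
-/

open MeasureTheory Set Filter

theorem Set.indicator_Iic_comp_sub_div {M : Type*} [Zero M] (h : ℝ → M) (m : ℝ) {s : ℝ}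
    (hs : 0 < s) (x : ℝ) :
    (Iic x).indicator (fun y => h ((y - m) / s))
      = fun y => (Iic ((x - m) / s)).indicator h ((y - m) / s) := by
  ext y
  simp only [indicator, mem_Iic, div_le_div_iff_of_pos_right hs, sub_le_sub_iff_right]

namespace MeasureTheory

variable {E : Type*} [NormedAddCommGroup E] [NormedSpace ℝ E]

theorem integral_comp_sub_div (h : ℝ → E) (m s : ℝ) :
    ∫ y, h ((y - m) / s) = |s| • ∫ z, h z := by
  rw [integral_sub_right_eq_self (fun y => h (y / s)) m, Measure.integral_comp_div]

theorem setIntegral_Iic_comp_sub_div (h : ℝ → E) (m : ℝ) {s : ℝ} (hs : 0 < s) (x : ℝ) :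
    ∫ y in Iic x, h ((y - m) / s) = s • ∫ z in Iic ((x - m) / s), h z := by
  rw [← integral_indicator measurableSet_Iic, indicator_Iic_comp_sub_div h m hs,
    integral_comp_sub_div, integral_indicator measurableSet_Iic, abs_of_pos hs]

end MeasureTheory

theorem setIntegral_Iic_deriv_comp_sub_div {g g' : ℝ → ℝ}
    (hderiv : ∀ z, HasDerivAt g (g' z) z) (hlim : Tendsto g atBot (nhds 0)) (m : ℝ) {s : ℝ}
    (hs : 0 < s) {x : ℝ}
    (hint : IntegrableOn g' (Iic ((x - m) / s))) :
    ∫ y in Iic x, g' ((y - m) / s) = s * g ((x - m) / s) := by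
  rw [setIntegral_Iic_comp_sub_div g' m hs x,
    integral_Iic_of_hasDerivAt_of_tendsto' (fun z _ => hderiv z) hint hlim, sub_zero,
    smul_eq_mul]

theorem setIntegral_Iic_deriv_mul_affine_comp_sub_div {f f' : ℝ → ℝ}
    (hderiv : ∀ z, HasDerivAt f (f' z) z) (hlim1 : Tendsto (fun z => z * f z) atBot (nhds 0))
    (hlim2 : Tendsto f atBot (nhds 0)) (hint0 : ∀ c, IntegrableOn f (Iic c))
    (hint1 : ∀ c, IntegrableOn f' (Iic c))
    (hint2 : ∀ c, IntegrableOn (fun z => z * f' z) (Iic c))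
    (a b m : ℝ) {s : ℝ} (hs : 0 < s) (x : ℝ) :
    ∫ y in Iic x, (f' ((y - m) / s) * (a + (y - m) / s * b) + f ((y - m) / s) * b)
      = s * (f ((x - m) / s) * (a + (x - m) / s * b)) := by
  set g : ℝ → ℝ := fun z => f z * (a + z * b)
  set g' : ℝ → ℝ := fun z => f' z * (a + z * b) + f z * b
  have hg : ∀ z, HasDerivAt g (g' z) z := fun z =>
    ((hderiv z).mul (((hasDerivAt_id' z).mul_const b).const_add a)).congr_deriv (by ring)
  have hg_lim : Tendsto g atBot (nhds 0) := by
    have h := (hlim2.const_mul a).add (hlim1.mul_const b)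
    rw [mul_zero, zero_mul, add_zero] at h
    exact h.congr fun z => by ring
  have hg'_int : IntegrableOn g' (Iic ((x - m) / s)) :=
    IntegrableOn.congr_fun ((((hint1 _).const_mul a).add ((hint2 _).const_mul b)).add
      ((hint0 _).mul_const b)) (fun z _ => by simp only [g', Pi.add_apply]; ring)
      measurableSet_Iic
  exact setIntegral_Iic_deriv_comp_sub_div hg hg_lim m hs hg'_int

theorem integral_mul_add_mul_sq {ν : Measure ℝ} {f : ℝ → ℝ} (h0 : Integrable f ν)
    (h1 : Integrable (fun z => z * f z) ν) (h2 : Integrable (fun z => z ^ 2 * f z) ν) (a b : ℝ) :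
    ∫ z, f z * (a + z * b) ^ 2 ∂ν
      = a ^ 2 * ∫ z, f z ∂ν + 2 * a * b * ∫ z, z * f z ∂ν + b ^ 2 * ∫ z, z ^ 2 * f z ∂ν := by
  have hexpand : (fun z => f z * (a + z * b) ^ 2)
      = fun z => a ^ 2 * f z + 2 * a * b * (z * f z) + b ^ 2 * (z ^ 2 * f z) := by
    funext z; ring
  rw [hexpand, integral_add, integral_add, integral_const_mul, integral_const_mul,
    integral_const_mul]
  exacts [h0.const_mul _, h1.const_mul _, (h0.const_mul _).add (h1.const_mul _), h2.const_mul _]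

theorem location_scale_W_metric_euclidean_general (f f' : ℝ → ℝ)
    (hf_int : Integrable f)
    (hf_tot : ∫ x, f x = 1)
    (hmean : Integrable (fun z => z * f z)) (hmean0 : ∫ z, z * f z = 0)
    (hvar : Integrable (fun z => z ^ 2 * f z)) (hvar1 : ∫ z, z ^ 2 * f z = 1)
    (hderiv : ∀ x, HasDerivAt f (f' x) x)
    (hlim1 : Tendsto (fun x => x * f x) atBot (nhds 0))
    (hlim2 : Tendsto f atBot (nhds 0))
    (hint1 : ∀ x : ℝ, IntegrableOn f' (Iic x))
    (hint2 : ∀ x : ℝ, IntegrableOn (fun y => y * f' y) (Iic x))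
    (μ σ : ℝ) (hσ : 0 < σ)
    (p : ℝ → ℝ) (hp : p = fun x => (1 / σ) * f ((x - μ) / σ))
    (dpdμ dpdσ : ℝ → ℝ)
    (hdpdμ : dpdμ = fun y => -(1 / σ ^ 2) * f' ((y - μ) / σ))
    (hdpdσ : dpdσ = fun y =>
      -(1 / σ ^ 3) * (σ * f ((y - μ) / σ) + (y - μ) * f' ((y - μ) / σ))) :
    ∀ dμ dσ : ℝ,
      ∫ x, (1 / p x) * (∫ y in Iic x, (dpdμ y * dμ + dpdσ y * dσ)) ^ 2
        = dμ ^ 2 + dσ ^ 2 := by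
  intro dμ dσ
  have hinner (x : ℝ) :
      ∫ y in Iic x, (dpdμ y * dμ + dpdσ y * dσ) = -(p x) * (dμ + (x - μ) / σ * dσ) := by
    calc ∫ y in Iic x, (dpdμ y * dμ + dpdσ y * dσ)
        = -(1 / σ ^ 2) * ∫ y in Iic x, (f' ((y - μ) / σ) * (dμ + (y - μ) / σ * dσ)
            + f ((y - μ) / σ) * dσ) := by
          rw [← integral_const_mul]
          congr 1; funext y; simp only [hdpdμ, hdpdσ]; field_simp; ring
      _ = -(p x) * (dμ + (x - μ) / σ * dσ) := by
          rw [setIntegral_Iic_deriv_mul_affine_comp_sub_div hderiv hlim1 hlim2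
            (fun _ => hf_int.integrableOn) hint1 hint2 dμ dσ μ hσ x, hp]
          field_simp
  have hcost (x : ℝ) : (1 / p x) * (∫ y in Iic x, (dpdμ y * dμ + dpdσ y * dσ)) ^ 2
      = (1 / σ) * (f ((x - μ) / σ) * (dμ + (x - μ) / σ * dσ) ^ 2) := by
    rw [hinner, neg_mul, neg_sq, mul_pow, ← mul_assoc, one_div_mul_eq_div, sq (p x),
      mul_self_div_self, hp]
    ring
  simp_rw [hcost]
  rw [integral_const_mul, integral_comp_sub_div (fun z => f z * (dμ + z * dσ) ^ 2),
    integral_mul_add_mul_sq hf_int hmean hvar, hf_tot, hmean0, hvar1, abs_of_pos hσ,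
    smul_eq_mul]
  field_simp
  ring

/-- The Wasserstein Riemannian metric of a location-scale family is the identity:
the infinitesimal cost equals dμ² + dσ², irrespective of f. -/
theorem location_scale_W_metric_euclidean (f f' : ℝ → ℝ)
    (hf_pos : ∀ x, 0 < f x) (hf_int : Integrable f)
    (hf_tot : ∫ x, f x = 1)
    (hmean : Integrable (fun z => z * f z)) (hmean0 : ∫ z, z * f z = 0)
    (hvar : Integrable (fun z => z ^ 2 * f z)) (hvar1 : ∫ z, z ^ 2 * f z = 1)
    (hderiv : ∀ x, HasDerivAt f (f' x) x)
    (hlim1 : Tendsto (fun x => x * f x) atBot (nhds 0))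
    (hlim2 : Tendsto f atBot (nhds 0))
    (hint1 : ∀ x : ℝ, IntegrableOn f' (Iic x))
    (hint2 : ∀ x : ℝ, IntegrableOn (fun y => y * f' y) (Iic x))
    (μ σ : ℝ) (hσ : 0 < σ)
    (p : ℝ → ℝ) (hp : p = fun x => (1 / σ) * f ((x - μ) / σ))
    (dpdμ dpdσ : ℝ → ℝ)
    (hdpdμ : dpdμ = fun y => -(1 / σ ^ 2) * f' ((y - μ) / σ))
    (hdpdσ : dpdσ = fun y =>
      -(1 / σ ^ 3) * (σ * f ((y - μ) / σ) + (y - μ) * f' ((y - μ) / σ))) :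
    ∀ dμ dσ : ℝ,
      ∫ x, (1 / p x) * (∫ y in Iic x, (dpdμ y * dμ + dpdσ y * dσ)) ^ 2
        = dμ ^ 2 + dσ ^ 2 :=
  location_scale_W_metric_euclidean_general f f' hf_int hf_tot hmean hmean0 hvar hvar1 hderiv hlim1
    hlim2 hint1 hint2 μ σ hσ p hp dpdμ dpdσ hdpdμ hdpdσ
end
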